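/- arXiv:0806.1188 — 9 statements merged into one kernel-verified Lean document; each statement's English description precedes it below -/
import Mathlib

section
/- Let k be a positive integer and let Γ be a k-free group. Let R ≤ Γ be a finitely generated subgroup of rank strictly less than k, and let C ≤ Γ be a cyclic subgroup such that the subgroup ⟨R ∪ C⟩ generated by R and C has rank strictly greater than the rank of R. Then C is infinite cyclic, and ⟨R ∪ C⟩ is the internal free product of R and C; that is, the canonical homomorphism from the free product R ∗ C to Γ induced by the inclusions of R and of C is injective and has image ⟨R ∪ C⟩. -/
/-- The rank of a subgroup: the minimal cardinality of a finite generating set,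
or `⊤` if the subgroup is not finitely generated. -/
noncomputable def Subgroup.rk {Γ : Type*} [Group Γ] (H : Subgroup Γ) : ℕ∞ :=
  sInf {n : ℕ∞ | ∃ S : Finset Γ, (S.card : ℕ∞) = n ∧ Subgroup.closure (S : Set Γ) = H}

/-- A group is `k`-free if every finitely generated subgroup of rank at most `k` is free. -/
def IsKFree (k : ℕ) (Γ : Type*) [Group Γ] : Prop :=
  ∀ H : Subgroup Γ, H.rk ≤ (k : ℕ∞) → IsFreeGroup H

/-!
Let `S` be a minimal generating set of `R` and `C = ⟨g⟩`. The family `S ∪ {g}` generates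
`R ⊔ C`, whose rank, being larger than `|S|`, is therefore exactly `|S| + 1 ≤ k`; so `R ⊔ C` is
free of that rank. Free groups are residually finite (a reduced word of length `L`, read as a
labelled path on `L + 1` vertices, makes the letters act by permutations of the vertices under
which the word moves one end of the path to the other), hence finitely generated free groups are
Hopfian, and a generating family of a free group whose size is the rank is a basis. So
`FreeGroup (S ⊕ Unit) → R ⊔ C` is an isomorphism, and splitting it along `S ⊕ Unit` exhibits
`R ⊔ C` as the free product of `R ≅ F(S)` and `C ≅ F(Unit) ≅ ℤ`.
-/

open Function

theorem List.prod_smul_eq_of_getElem_smul {M β : Type*} [Monoid M] [MulAction M β]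
    (l : List M) (x : ℕ → β) (hx : ∀ (i : ℕ) (hi : i < l.length), l[i] • x (i + 1) = x i) :
    l.prod • x l.length = x 0 := by
  induction l generalizing x with
  | nil => simp
  | cons m l ih =>
    rw [List.prod_cons, mul_smul, List.length_cons,
      ih (fun i => x (i + 1)) fun i hi => hx (i + 1) (by simpa using hi)]
    exact hx 0 (by simp)

namespace FreeGroup

variable {α : Type*}

theorem exists_perm_of_isReduced {w : List (α × Bool)} (hw : IsReduced w) (a : α) :
    ∃ σ : Equiv.Perm (Fin (w.length + 1)), ∀ (i : ℕ) (hi : i < w.length), w[i].1 = a →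
      cond w[i].2 σ σ⁻¹ • Fin.ofNat (w.length + 1) (i + 1) = Fin.ofNat (w.length + 1) i := by
  let E := {i : Fin w.length // w[(i : ℕ)].1 = a}
  have adj : ∀ j k : E, (j.1 : ℕ) + 1 = k.1 → w[(j.1 : ℕ)].2 = w[(k.1 : ℕ)].2 := by
    rintro ⟨⟨j, -⟩, hj⟩ ⟨⟨_, hk⟩, hk'⟩ (rfl : j + 1 = _)
    exact List.isChain_iff_getElem.mp hw j hk (hj.trans hk'.symm)
  -- The letter at position `j` is the edge `endpoint true j ↦ endpoint false j` of the path;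
  -- reducedness makes the edges labelled `a` a partial injection.
  let endpoint (b : Bool) (j : E) : Fin (w.length + 1) :=
    if w[(j.1 : ℕ)].2 = b then j.1.succ else j.1.castSucc
  have endpoint_injective (b : Bool) : Injective (endpoint b) := by
    intro j k h
    have := adj j k
    have := adj k j
    simp only [endpoint, Fin.ext_iff] at h
    ext
    split_ifs at h <;> simp at h <;> simp_all
  obtain ⟨σ, hσ⟩ := Equiv.Perm.exists_extending_pair _ _ (endpoint_injective true)
    (endpoint_injective false)
  refine ⟨σ, fun i hi ha => ?_⟩
  have hσi := hσ ⟨⟨i, hi⟩, ha⟩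
  have hsucc : (⟨i, hi⟩ : Fin w.length).succ = Fin.ofNat (w.length + 1) (i + 1) := by
    ext; simp [Nat.mod_eq_of_lt, hi]
  have hcast : (⟨i, hi⟩ : Fin w.length).castSucc = Fin.ofNat (w.length + 1) i := by
    ext; simp [Nat.mod_eq_of_lt, hi.trans (Nat.lt_succ_self _)]
  cases hb : w[i].2 <;> simp_all [endpoint, Equiv.symm_apply_eq]

instance instResiduallyFinite : Group.ResiduallyFinite (FreeGroup α) := by
  classical
  refine Group.residuallyFinite_of_forall_exists_finite_monoidHom fun x hx => ?_
  choose σ hσ using exists_perm_of_isReduced (isReduced_toWord (x := x))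
  refine ⟨_, inferInstance, inferInstance, lift σ, fun h => hx ?_⟩
  have hprod := List.prod_smul_eq_of_getElem_smul
    (x.toWord.map fun c => cond c.2 (σ c.1) (σ c.1)⁻¹) (Fin.ofNat (x.toWord.length + 1))
    fun i hi => by simpa using hσ _ i (by simpa using hi) rfl
  rw [← lift_mk, mk_toWord, h, one_smul, Fin.ext_iff] at hprod
  simpa [Nat.mod_eq_of_lt, toWord_eq_nil_iff] using hprod

end FreeGroup

theorem MonoidHom.comp_injective_of_surjective {M N P : Type*} [MulOneClass M] [MulOneClass N]
    [MulOneClass P] {f : M →* N} (hf : Surjective f) : Injective fun g : N →* P => g.comp f :=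
  fun _ _ h => (MonoidHom.cancel_right hf).mp h

instance MonoidHom.finite_of_fg {G Q : Type*} [Group G] [Group Q] [Group.FG G] [Finite Q] :
    Finite (G →* Q) := by
  obtain ⟨α, _, φ, hφ⟩ := Group.fg_iff_exists_freeGroup_hom_surjective_finite.mp ‹Group.FG G›
  have : Finite (FreeGroup α →* Q) := .of_equiv _ FreeGroup.lift
  exact .of_injective _ (MonoidHom.comp_injective_of_surjective (P := Q) hφ)

/-- Mal'cev: precomposition with `φ` permutes the finite set `G →* G ⧸ H`, so the projection
`G →* G ⧸ H` factors through `φ` and kills its kernel. -/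
theorem Group.ResiduallyFinite.injective_of_surjective {G : Type*} [Group G] [Group.FG G]
    [Group.ResiduallyFinite G] {φ : G →* G} (hφ : Surjective φ) : Injective φ := by
  refine (injective_iff_map_eq_one φ).mpr fun x hx => ?_
  by_contra hx1
  obtain ⟨H, hxH⟩ := Group.exists_finiteIndexNormalSubgroup_notMem x hx1
  obtain ⟨ψ, hψ⟩ := Finite.injective_iff_surjective.mp
    (MonoidHom.comp_injective_of_surjective (P := G ⧸ H.toSubgroup) hφ) (QuotientGroup.mk' _)
  refine hxH ((QuotientGroup.eq_one_iff x).mp ?_)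
  rw [← QuotientGroup.mk'_apply, ← hψ, MonoidHom.comp_apply, hx, map_one]

namespace FreeGroup

variable {ι κ : Type*}

/-- Counting homomorphisms to `ℤ/2`: there are `2 ^ |ι|` of them on `FreeGroup ι`, and they are
determined by their values on the images of the `κ` generators. -/
theorem finite_and_card_le_of_surjective [Finite κ] {φ : FreeGroup κ →* FreeGroup ι}
    (hφ : Surjective φ) : Finite ι ∧ Nat.card ι ≤ Nat.card κ := by
  let Q := Multiplicative (ZMod 2)
  let restrict : (ι → Q) → (κ → Q) :=
    FreeGroup.lift.symm ∘ (fun g : FreeGroup ι →* Q => g.comp φ) ∘ FreeGroup.lift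
  have hrestrict : Injective restrict := FreeGroup.lift.symm.injective.comp <|
    (MonoidHom.comp_injective_of_surjective hφ).comp FreeGroup.lift.injective
  have : Finite (ι → Q) := .of_injective _ hrestrict
  have : Finite ι := by
    by_contra h
    have : Infinite ι := not_finite_iff_infinite.mp h
    exact not_finite (ι → Q)
  refine ⟨this, ?_⟩
  have hcard := Nat.card_le_card_of_injective _ hrestrict
  simp only [Nat.card_fun, Q, Nat.card_eq_fintype_card, Fintype.card_multiplicative,
    ZMod.card] at hcard
  exact (Nat.pow_le_pow_iff_right (by norm_num)).mp hcard

theorem injective_of_surjective_of_card_le [Finite κ] {φ : FreeGroup κ →* FreeGroup ι}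
    (hφ : Surjective φ) (hcard : Nat.card κ ≤ Nat.card ι) : Injective φ := by
  obtain ⟨_, hle⟩ := finite_and_card_le_of_surjective hφ
  obtain ⟨e⟩ := Finite.card_eq.mp (le_antisymm hle hcard)
  let ψ := φ.comp (freeGroupCongr e).toMonoidHom
  have hψ : Injective ψ :=
    Group.ResiduallyFinite.injective_of_surjective (hφ.comp (freeGroupCongr e).surjective)
  simpa [ψ] using hψ.comp (freeGroupCongr e).symm.injective

end FreeGroup

namespace Subgroup

variable {Γ : Type*} [Group Γ] {H : Subgroup Γ}

theorem rk_le_natCard {ι : Type*} [Finite ι] {v : ι → Γ} (hv : (FreeGroup.lift v).range = H) :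
    H.rk ≤ Nat.card ι := by
  have hfin := Set.finite_range v
  refine le_trans (b := (hfin.toFinset.card : ℕ∞)) (sInf_le ⟨_, rfl, ?_⟩) ?_
  · rw [Set.Finite.coe_toFinset, ← FreeGroup.range_lift_eq_closure, hv]
  · rw [← Nat.card_eq_card_finite_toFinset]
    exact_mod_cast Finite.card_range_le v

theorem exists_finset_card_eq_rk (h : H.rk ≠ ⊤) :
    ∃ S : Finset Γ, (S.card : ℕ∞) = H.rk ∧ closure (S : Set Γ) = H := by
  have hne : {n : ℕ∞ | ∃ S : Finset Γ, (S.card : ℕ∞) = n ∧ closure (S : Set Γ) = H}.Nonempty :=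
    Set.nonempty_iff_ne_empty.mpr fun hempty => h (by rw [rk, hempty, sInf_empty])
  exact csInf_mem hne

end Subgroup

theorem FreeGroup.injective_lift_of_natCard_le_rk {Γ κ : Type*} [Group Γ] [Finite κ] {v : κ → Γ}
    [IsFreeGroup (lift v).range] (h : (Nat.card κ : ℕ∞) ≤ (lift v).range.rk) :
    Injective (lift v) := by
  let b := IsFreeGroup.basis (lift v).range
  have hsurj : Surjective (b.repr.toMonoidHom.comp (lift v).rangeRestrict) :=
    b.repr.surjective.comp (lift v).rangeRestrict_surjective
  have : Finite _ := (finite_and_card_le_of_surjective hsurj).1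
  have hb : (lift fun i => (b i : Γ)).range = (lift v).range := by
    have : (lift fun i => (b i : Γ)) = (lift v).range.subtype.comp b.repr.symm.toMonoidHom :=
      ext_hom _ _ fun _ => by simp; rfl
    rw [this, MonoidHom.range_comp,
      (MonoidHom.range_eq_top (f := b.repr.symm.toMonoidHom)).mpr b.repr.symm.surjective,
      ← MonoidHom.range_eq_map]
    exact Subgroup.range_subtype _
  have hinj := injective_of_surjective_of_card_le hsurj
    (by exact_mod_cast h.trans (Subgroup.rk_le_natCard hb))
  exact MonoidHom.rangeRestrict_injective_iff.mp (Injective.of_comp hinj)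

def FreeGroup.sumMulEquivCoprod {α β : Type*} :
    FreeGroup (α ⊕ β) ≃* Monoid.Coprod (FreeGroup α) (FreeGroup β) :=
  MonoidHom.toMulEquiv (lift (Sum.elim (Monoid.Coprod.inl ∘ of) (Monoid.Coprod.inr ∘ of)))
    (Monoid.Coprod.lift (map Sum.inl) (map Sum.inr))
    (ext_hom _ _ <| Sum.rec (fun _ => rfl) fun _ => rfl)
    (Monoid.Coprod.hom_ext (ext_hom _ _ fun _ => rfl) (ext_hom _ _ fun _ => rfl))

theorem Monoid.Coprod.injective_lift_subtype {M N Γ : Type*} [Group M] [Group N] [Group Γ]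
    {ψ : Monoid.Coprod M N →* Γ} (hψ : Injective ψ) {R C : Subgroup Γ}
    (hR : (ψ.comp inl).range = R) (hC : (ψ.comp inr).range = C) :
    Injective (lift R.subtype C.subtype) := by
  subst hR hC
  let e := MulEquiv.coprodCongr (MonoidHom.ofInjective (f := ψ.comp inl) (hψ.comp inl_injective))
    (MonoidHom.ofInjective (f := ψ.comp inr) (hψ.comp inr_injective))
  have he : (lift (ψ.comp inl).range.subtype (ψ.comp inr).range.subtype).comp e.toMonoidHom = ψ :=
    hom_ext (MonoidHom.ext fun _ => rfl) (MonoidHom.ext fun _ => rfl)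
  intro x y hxy
  obtain ⟨x, rfl⟩ := e.surjective x
  obtain ⟨y, rfl⟩ := e.surjective y
  have : ψ x = ψ y := by rw [← he]; exact hxy
  rw [hψ this]

theorem stmt0_general {Γ : Type*} [Group Γ] (k : ℕ) (hfree : IsKFree k Γ)
    (R C : Subgroup Γ) (hRrank : R.rk < (k : ℕ∞))
    (hCcyc : ∃ g : Γ, C = Subgroup.zpowers g)
    (hrank : R.rk < (R ⊔ C).rk) :
    Infinite C ∧
      Function.Injective (Monoid.Coprod.lift R.subtype C.subtype) ∧
      (Monoid.Coprod.lift R.subtype C.subtype).range = R ⊔ C := by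
  obtain ⟨g, rfl⟩ := hCcyc
  obtain ⟨S, hScard, hS⟩ := R.exists_finset_card_eq_rk hRrank.ne_top
  let W : S ⊕ Unit → Γ := Sum.elim Subtype.val fun _ => g
  have hR : (FreeGroup.lift (Subtype.val : S → Γ)).range = R := by
    rw [FreeGroup.range_lift_eq_closure, Subtype.range_coe, hS]
  have hC : (FreeGroup.lift fun _ : Unit => g).range = Subgroup.zpowers g := by
    rw [FreeGroup.range_lift_eq_closure, Set.range_const, Subgroup.zpowers_eq_closure]
  have hW : (FreeGroup.lift W).range = R ⊔ Subgroup.zpowers g := by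
    rw [FreeGroup.range_lift_eq_closure, Set.Sum.elim_range, Subgroup.closure_union,
      ← FreeGroup.range_lift_eq_closure, ← FreeGroup.range_lift_eq_closure, hR, hC]
  have hcard : (Nat.card (S ⊕ Unit) : ℕ∞) = R.rk + 1 := by simp [← hScard]
  have : IsFreeGroup (FreeGroup.lift W).range :=
    hfree _ <| (Subgroup.rk_le_natCard rfl).trans <| hcard ▸ Order.add_one_le_of_lt hRrank
  let ψ := (FreeGroup.lift W).comp FreeGroup.sumMulEquivCoprod.symm.toMonoidHom
  have hψ : Injective ψ := (FreeGroup.injective_lift_of_natCard_le_rk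
    (hcard ▸ hW ▸ Order.add_one_le_of_lt hrank)).comp FreeGroup.sumMulEquivCoprod.symm.injective
  have hψR : ψ.comp Monoid.Coprod.inl = FreeGroup.lift Subtype.val :=
    FreeGroup.ext_hom _ _ fun _ => rfl
  have hψC : ψ.comp Monoid.Coprod.inr = FreeGroup.lift fun _ => g :=
    FreeGroup.ext_hom _ _ fun _ => rfl
  refine ⟨?_, Monoid.Coprod.injective_lift_subtype hψ (hψR ▸ hR) (hψC ▸ hC), by
    rw [Monoid.Coprod.range_lift, Subgroup.range_subtype, Subgroup.range_subtype]⟩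
  rw [← hC, ← hψC]
  exact (MonoidHom.ofInjective (hψ.comp Monoid.Coprod.inr_injective :
    Injective (ψ.comp Monoid.Coprod.inr))).toEquiv.infinite_iff.mp inferInstance

/-- If `Γ` is `k`-free, `R ≤ Γ` is a finitely generated subgroup of rank `< k`, and `C` is a
cyclic subgroup such that `⟨R ∪ C⟩` has rank strictly greater than that of `R`, then `C` is
infinite cyclic and `⟨R ∪ C⟩` is the internal free product of `R` and `C`: the canonical
homomorphism `R ∗ C →* Γ` induced by the inclusions is injective with image `R ⊔ C`. -/
theorem stmt0 {Γ : Type*} [Group Γ] (k : ℕ) (hk : 0 < k) (hfree : IsKFree k Γ)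
    (R C : Subgroup Γ) (hRrank : R.rk < (k : ℕ∞))
    (hCcyc : ∃ g : Γ, C = Subgroup.zpowers g)
    (hrank : R.rk < (R ⊔ C).rk) :
    Infinite C ∧
      Function.Injective (Monoid.Coprod.lift R.subtype C.subtype) ∧
      (Monoid.Coprod.lift R.subtype C.subtype).range = R ⊔ C :=
  stmt0_general k hfree R C hRrank hCcyc hrank
end

section
/- For each integer n ≥ 1, the function Φ_n is monotone increasing in each of its two variables on its domain: if 0 < δ ≤ δ' ≤ D then Φ_n(δ, D) ≤ Φ_n(δ', D), and if 0 < δ ≤ D ≤ D' then Φ_n(δ, D) ≤ Φ_n(δ, D'). -/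
open Real

/-- The inverse hyperbolic cosine. -/
noncomputable def arcosh (x : ℝ) : ℝ := Real.log (x + Real.sqrt (x ^ 2 - 1))

/-- The function `Φ_n`, defined for `0 < δ ≤ D`. -/
noncomputable def Phi (n : ℕ) (δ D : ℝ) : ℝ :=
  _root_.arcosh (Real.cosh (n * δ) +
    (Real.cosh (n * δ) - 1) * (Real.cosh D - Real.cosh δ) / (Real.cosh δ + 1))

/-!
Writing `r_n(δ) = (cosh nδ - 1) / (cosh δ + 1)`, the argument of `arcosh` in `Φ_n(δ, D)` is
`1 + (cosh D + 1) r_n(δ)`. Monotonicity in `D` is then clear, and monotonicity in `δ` reduces to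
that of `r_n(δ) = (sinh (nδ/2) / cosh (δ/2))²`. For `a ≤ b` and `r ≥ 1`, product-to-sum turns
`sinh (ra) cosh b ≤ sinh (rb) cosh a` into
`sinh (ra + b) + sinh (ra - b) ≤ sinh (rb + a) + sinh (rb - a)`, which holds termwise.
-/

theorem cosh_sub_one_div_cosh_add_one_nonneg (x y : ℝ) : 0 ≤ (cosh x - 1) / (cosh y + 1) :=
  div_nonneg (sub_nonneg.mpr (one_le_cosh x)) (by linarith [one_le_cosh y])

theorem cosh_two_mul_sub_one_div_cosh_two_mul_add_one (x y : ℝ) :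
    (cosh (2 * x) - 1) / (cosh (2 * y) + 1) = (sinh x / cosh y) ^ 2 := by
  rw [cosh_two_mul, cosh_two_mul, cosh_sq x, sinh_sq y, div_pow,
    div_eq_div_iff (by nlinarith [cosh_pos y]) (by positivity)]
  ring

theorem sinh_mul_mul_cosh_le {r a b : ℝ} (hr : 1 ≤ r) (hab : a ≤ b) :
    sinh (r * a) * cosh b ≤ sinh (r * b) * cosh a := by
  have product_to_sum (x y : ℝ) : 2 * (sinh x * cosh y) = sinh (x + y) + sinh (x - y) := by
    rw [sinh_add, sinh_sub]; ring
  have h₁ : sinh (r * a + b) ≤ sinh (r * b + a) := sinh_le_sinh.mpr (by nlinarith)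
  have h₂ : sinh (r * a - b) ≤ sinh (r * b - a) := sinh_le_sinh.mpr (by nlinarith)
  linarith [product_to_sum (r * a) b, product_to_sum (r * b) a]

theorem cosh_nat_mul_sub_one_div_cosh_add_one_le (n : ℕ) {δ δ' : ℝ} (hδ : 0 ≤ δ)
    (hδδ' : δ ≤ δ') :
    (cosh (n * δ) - 1) / (cosh δ + 1) ≤ (cosh (n * δ') - 1) / (cosh δ' + 1) := by
  rcases Nat.eq_zero_or_pos n with rfl | hpos
  · simp
  have half_angle (x : ℝ) :
      (cosh (n * x) - 1) / (cosh x + 1) = (sinh (n * (x / 2)) / cosh (x / 2)) ^ 2 := by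
    rw [← cosh_two_mul_sub_one_div_cosh_two_mul_add_one]; ring_nf
  rw [half_angle, half_angle]
  have hn : (1 : ℝ) ≤ n := by exact_mod_cast hpos
  have : 0 ≤ sinh (n * (δ / 2)) := sinh_nonneg_iff.mpr (by positivity)
  refine pow_le_pow_left₀ (by positivity) ?_ 2
  rw [div_le_div_iff₀ (cosh_pos _) (cosh_pos _)]
  exact sinh_mul_mul_cosh_le hn (by linarith)

theorem Phi_eq (n : ℕ) (δ D : ℝ) :
    Phi n δ D = Real.arcosh (1 + (cosh D + 1) * ((cosh (n * δ) - 1) / (cosh δ + 1))) := by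
  have : cosh δ + 1 ≠ 0 := (add_pos (cosh_pos δ) one_pos).ne'
  unfold Phi
  -- `_root_.arcosh` unfolds to the same term as Mathlib's `Real.arcosh`
  change Real.arcosh _ = _
  congr 1
  field_simp
  ring

theorem Phi_arg_pos (n : ℕ) (δ D : ℝ) :
    0 < 1 + (cosh D + 1) * ((cosh (n * δ) - 1) / (cosh δ + 1)) := by
  have := cosh_sub_one_div_cosh_add_one_nonneg (n * δ) δ
  positivity

theorem stmt5_general (n : ℕ) :
    (∀ δ δ' D : ℝ, 0 < δ → δ ≤ δ' → δ' ≤ D → Phi n δ D ≤ Phi n δ' D) ∧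
    (∀ δ D D' : ℝ, 0 < δ → δ ≤ D → D ≤ D' → Phi n δ D ≤ Phi n δ D') := by
  constructor
  · intro δ δ' D hδ hδδ' _
    have hratio := cosh_nat_mul_sub_one_div_cosh_add_one_le n hδ.le hδδ'
    rw [Phi_eq, Phi_eq, Real.arcosh_le_arcosh (Phi_arg_pos ..) (Phi_arg_pos ..)]
    gcongr
  · intro δ D D' hδ hδD hDD'
    have hcosh : cosh D ≤ cosh D' := by
      rw [cosh_le_cosh, abs_of_nonneg (by linarith), abs_of_nonneg (by linarith)]
      exact hDD'
    have hratio := cosh_sub_one_div_cosh_add_one_nonneg (n * δ) δ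
    rw [Phi_eq, Phi_eq, Real.arcosh_le_arcosh (Phi_arg_pos ..) (Phi_arg_pos ..)]
    gcongr

/-- For each `n ≥ 1`, the function `Φ_n` is monotone increasing in each of its variables on
the domain `{(δ, D) : 0 < δ ≤ D}`. -/
theorem stmt5 (n : ℕ) (hn : 1 ≤ n) :
    (∀ δ δ' D : ℝ, 0 < δ → δ ≤ δ' → δ' ≤ D → Phi n δ D ≤ Phi n δ' D) ∧
    (∀ δ D D' : ℝ, 0 < δ → δ ≤ D → D ≤ D' → Phi n δ D ≤ Phi n δ D') :=
  stmt5_general n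
end

section
/- Let n ≥ 1 be an integer and let A > 1 be a real number. Then the function f defined by f(u) = (2A + 2)(uⁿ + u⁻ⁿ − 2)/(u + u⁻¹ + 2) + 2 is strictly monotone increasing on the interval (1, ∞). -/
open Finset

private lemma pair_mono {x y : ℝ} (hx : 1 ≤ x) (hxy : x ≤ y) :
    x + x⁻¹ ≤ y + y⁻¹ := by
  have hx0 : 0 < x := by linarith
  have hy0 : 0 < y := by linarith
  rw [← sub_nonneg]
  have h : y + y⁻¹ - (x + x⁻¹) = (y - x) * (x * y - 1) / (x * y) := by
    field_simp
    ring
  rw [h]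
  have h1 : (1:ℝ) ≤ x * y := by nlinarith
  apply div_nonneg
  · exact mul_nonneg (by linarith) (by linarith)
  · positivity

private lemma pair_mono_pow (k : ℕ) {x y : ℝ} (hx : 1 ≤ x) (hxy : x ≤ y) :
    x ^ k + (x ^ k)⁻¹ ≤ y ^ k + (y ^ k)⁻¹ :=
  pair_mono (one_le_pow₀ hx) (pow_le_pow_left₀ (by linarith) hxy k)

private lemma pair_mono_zpow (m : ℤ) {x y : ℝ} (hx : 1 ≤ x) (hxy : x ≤ y) :
    x ^ m + x ^ (-m) ≤ y ^ m + y ^ (-m) := by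
  rcases m.eq_nat_or_neg with ⟨k, rfl | rfl⟩
  · simp only [zpow_neg, zpow_natCast]
    exact pair_mono_pow k hx hxy
  · simp only [neg_neg, zpow_neg, zpow_natCast]
    have := pair_mono_pow k hx hxy
    linarith

private noncomputable def Bfun (n : ℕ) (x : ℝ) : ℝ :=
  ∑ k ∈ range n, x ^ ((n : ℤ) - 1 - 2 * k)

private lemma Bfun_identity (n : ℕ) {x : ℝ} (hx : x ≠ 0) :
    (x - x⁻¹) * Bfun n x = x ^ n - (x ^ n)⁻¹ := by
  induction n with
  | zero => simp [Bfun]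
  | succ n ih =>
    have hstep : Bfun (n + 1) x = x * Bfun n x + x ^ (-(n : ℤ)) := by
      rw [Bfun, sum_range_succ, Bfun, mul_sum]
      congr 1
      · apply sum_congr rfl
        intro k hk
        have : ((n + 1 : ℕ) : ℤ) - 1 - 2 * k = 1 + ((n : ℤ) - 1 - 2 * k) := by
          push_cast; ring
        rw [this, zpow_add₀ hx, zpow_one]
      · congr 1
        push_cast
        ring
    rw [hstep, mul_add, mul_comm x (Bfun n x), ← mul_assoc, ih]
    have h3 : x ^ (-(n : ℤ)) = (x ^ n)⁻¹ := by
      rw [zpow_neg, zpow_natCast]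
    rw [h3, pow_succ]
    field_simp
    ring

private lemma Bfun_reflect (n : ℕ) (x : ℝ) :
    Bfun n x = ∑ k ∈ range n, x ^ (-((n : ℤ) - 1 - 2 * k)) := by
  rw [Bfun, ← sum_range_reflect]
  apply sum_congr rfl
  intro k hk
  have hk' : k < n := mem_range.mp hk
  congr 1
  have : ((n - 1 - k : ℕ) : ℤ) = (n : ℤ) - 1 - k := by omega
  rw [this]
  ring

private lemma Bfun_pos (n : ℕ) (hn : 1 ≤ n) {x : ℝ} (hx : 0 < x) :
    0 < Bfun n x := by
  apply sum_pos
  · intro k _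
    exact zpow_pos hx _
  · exact nonempty_range_iff.mpr (by omega)

private lemma Bfun_mono (n : ℕ) {x y : ℝ} (hx : 1 ≤ x) (hxy : x ≤ y) :
    Bfun n x ≤ Bfun n y := by
  have h2 : Bfun n x + Bfun n x ≤ Bfun n y + Bfun n y := by
    nth_rewrite 2 [Bfun_reflect]
    nth_rewrite 2 [Bfun_reflect]
    rw [Bfun, Bfun, ← sum_add_distrib, ← sum_add_distrib]
    refine sum_le_sum fun k _ => ?_
    have := pair_mono_zpow ((n : ℤ) - 1 - 2 * k) hx hxy
    linarith
  linarith

/-- The strictly increasing positive factor `(x - x⁻¹)/(x + x⁻¹)`. -/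
private lemma Ffun_strict {p q : ℝ} (hp : 1 < p) (hpq : p < q) :
    (p - p⁻¹) / (p + p⁻¹) < (q - q⁻¹) / (q + q⁻¹) := by
  have hp0 : 0 < p := by linarith
  have hq0 : 0 < q := by linarith
  rw [div_lt_div_iff₀ (by positivity) (by positivity)]
  have hp' : p⁻¹ * p = 1 := inv_mul_cancel₀ (ne_of_gt hp0)
  have hq' : q⁻¹ * q = 1 := inv_mul_cancel₀ (ne_of_gt hq0)
  have hpi : 0 < p⁻¹ := by positivity
  have hqi : 0 < q⁻¹ := by positivity
  nlinarith [mul_pos hp0 hq0, mul_pos hpi hqi, mul_lt_mul_of_pos_left hpq (mul_pos hpi hqi)]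

/-- For `n ≥ 1` and `A > 1`, the function
`f(u) = (2A + 2)(uⁿ + u⁻ⁿ − 2)/(u + u⁻¹ + 2) + 2` is strictly monotone increasing on
`(1, ∞)`. -/
theorem stmt6 (n : ℕ) (hn : 1 ≤ n) (A : ℝ) (hA : 1 < A) :
    StrictMonoOn
      (fun u : ℝ => (2 * A + 2) * (u ^ n + (u ^ n)⁻¹ - 2) / (u + u⁻¹ + 2) + 2)
      (Set.Ioi 1) := by
  have h2A : (0:ℝ) < 2 * A + 2 := by linarith
  -- the inner function r x = (x^n - (x^n)⁻¹)/(x + x⁻¹)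
  have key : ∀ x : ℝ, 0 < x →
      ((x ^ 2) ^ n + ((x ^ 2) ^ n)⁻¹ - 2) / (x ^ 2 + (x ^ 2)⁻¹ + 2)
        = ((x ^ n - (x ^ n)⁻¹) / (x + x⁻¹)) ^ 2 := by
    intro x hx
    have hx0 : x ≠ 0 := ne_of_gt hx
    have hxn : x ^ n ≠ 0 := pow_ne_zero n hx0
    have hden : x ^ 2 + (x ^ 2)⁻¹ + 2 = (x + x⁻¹) ^ 2 := by
      field_simp
      ring
    have hnum : (x ^ 2) ^ n + ((x ^ 2) ^ n)⁻¹ - 2 = (x ^ n - (x ^ n)⁻¹) ^ 2 := by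
      rw [← pow_mul, mul_comm 2 n, pow_mul]
      field_simp
      ring
    rw [hden, hnum, div_pow]
  have rmono : ∀ p q : ℝ, 1 < p → p < q →
      (p ^ n - (p ^ n)⁻¹) / (p + p⁻¹) < (q ^ n - (q ^ n)⁻¹) / (q + q⁻¹) ∧
      0 < (p ^ n - (p ^ n)⁻¹) / (p + p⁻¹) := by
    intro p q hp hpq
    have hq : 1 < q := lt_trans hp hpq
    have hp0 : (0:ℝ) < p := by linarith
    have hq0 : (0:ℝ) < q := by linarith
    have hrp : (p ^ n - (p ^ n)⁻¹) / (p + p⁻¹)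
        = (p - p⁻¹) / (p + p⁻¹) * Bfun n p := by
      rw [← Bfun_identity n (ne_of_gt hp0), mul_div_right_comm]
    have hrq : (q ^ n - (q ^ n)⁻¹) / (q + q⁻¹)
        = (q - q⁻¹) / (q + q⁻¹) * Bfun n q := by
      rw [← Bfun_identity n (ne_of_gt hq0), mul_div_right_comm]
    have hFp : 0 < (p - p⁻¹) / (p + p⁻¹) := by
      apply div_pos
      · have : p⁻¹ < 1 := inv_lt_one_of_one_lt₀ hp
        linarith
      · positivity
    have hFq : 0 < (q - q⁻¹) / (q + q⁻¹) := by
      apply div_pos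
      · have : q⁻¹ < 1 := inv_lt_one_of_one_lt₀ hq
        linarith
      · positivity
    have hF : (p - p⁻¹) / (p + p⁻¹) < (q - q⁻¹) / (q + q⁻¹) := Ffun_strict hp hpq
    have hBp : 0 < Bfun n p := Bfun_pos n hn hp0
    have hBq : Bfun n p ≤ Bfun n q := Bfun_mono n (le_of_lt hp) (le_of_lt hpq)
    constructor
    · rw [hrp, hrq]
      calc (p - p⁻¹) / (p + p⁻¹) * Bfun n p
          < (q - q⁻¹) / (q + q⁻¹) * Bfun n p := by
            exact mul_lt_mul_of_pos_right hF hBp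
        _ ≤ (q - q⁻¹) / (q + q⁻¹) * Bfun n q := by
            exact mul_le_mul_of_nonneg_left hBq (le_of_lt hFq)
    · rw [hrp]
      exact mul_pos hFp hBp
  intro a ha b hb hab
  simp only [Set.mem_Ioi] at ha hb
  have ha0 : (0:ℝ) ≤ a := by linarith
  have hb0 : (0:ℝ) ≤ b := by linarith
  set p := Real.sqrt a with hp_def
  set q := Real.sqrt b with hq_def
  have hpa : p ^ 2 = a := Real.sq_sqrt ha0
  have hqb : q ^ 2 = b := Real.sq_sqrt hb0
  have hp1 : 1 < p := by
    have h := Real.sqrt_lt_sqrt zero_le_one ha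
    rwa [Real.sqrt_one] at h
  have hpq : p < q := Real.sqrt_lt_sqrt ha0 hab
  have hp0 : (0:ℝ) < p := by linarith
  have hq0 : (0:ℝ) < q := by linarith
  obtain ⟨hlt, hpos⟩ := rmono p q hp1 hpq
  have hsq : ((p ^ n - (p ^ n)⁻¹) / (p + p⁻¹)) ^ 2
      < ((q ^ n - (q ^ n)⁻¹) / (q + q⁻¹)) ^ 2 :=
    pow_lt_pow_left₀ hlt (le_of_lt hpos) two_ne_zero
  have hg : (a ^ n + (a ^ n)⁻¹ - 2) / (a + a⁻¹ + 2)
      < (b ^ n + (b ^ n)⁻¹ - 2) / (b + b⁻¹ + 2) := by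
    rw [← hpa, ← hqb, key p hp0, key q hq0]
    exact hsq
  simp only
  rw [mul_div_assoc, mul_div_assoc]
  have := mul_lt_mul_of_pos_left hg h2A
  linarith
end

section
/- For every integer n ≥ 1 and all real numbers δ, D with 0 < δ ≤ D, one has n·δ ≤ Φ_n(δ, D) ≤ n·D. -/
open Real

/-!
Writing the argument of `arcosh` in `Φ_n(δ, D)` as
`1 + (cosh (nδ) - 1) · (cosh D + 1) / (cosh δ + 1)`, the lower bound is `cosh D ≥ cosh δ`.
For the upper bound, the half-angle formulas turn
`(cosh (nδ) - 1)(cosh D + 1) ≤ (cosh (nD) - 1)(cosh δ + 1)` into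
`sinh (nδ/2) cosh (D/2) ≤ sinh (nD/2) cosh (δ/2)`, which follows from
`2 sinh a cosh b = sinh (a + b) + sinh (a - b)` and the monotonicity of `sinh`.
-/

theorem arcosh_eq_real_arcosh : _root_.arcosh = Real.arcosh := rfl

theorem le_arcosh_of_cosh_le {a y : ℝ} (ha : 0 ≤ a) (h : cosh a ≤ y) : a ≤ Real.arcosh y :=
  calc a = Real.arcosh (cosh a) := (Real.arcosh_cosh ha).symm
    _ ≤ Real.arcosh y := (Real.arcosh_le_arcosh (cosh_pos a) ((cosh_pos a).trans_le h)).2 h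

theorem arcosh_le_of_le_cosh {b y : ℝ} (hb : 0 ≤ b) (hy : 0 < y) (h : y ≤ cosh b) :
    Real.arcosh y ≤ b :=
  calc Real.arcosh y ≤ Real.arcosh (cosh b) := (Real.arcosh_le_arcosh hy (cosh_pos b)).2 h
    _ = b := Real.arcosh_cosh hb

theorem cosh_sub_one_eq_two_mul_sinh_half_sq (x : ℝ) : cosh x - 1 = 2 * sinh (x / 2) ^ 2 := by
  have h := cosh_two_mul (x / 2)
  rw [mul_div_cancel₀ x two_ne_zero, cosh_sq] at h
  linarith

theorem cosh_add_one_eq_two_mul_cosh_half_sq (x : ℝ) : cosh x + 1 = 2 * cosh (x / 2) ^ 2 := by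
  have h := cosh_two_mul (x / 2)
  rw [mul_div_cancel₀ x two_ne_zero, sinh_sq] at h
  linarith

theorem sinh_mul_mul_cosh_le_s7 {t x y : ℝ} (ht : 1 ≤ t) (hxy : x ≤ y) :
    sinh (t * x) * cosh y ≤ sinh (t * y) * cosh x := by
  have hplus : sinh (t * x + y) ≤ sinh (t * y + x) := sinh_le_sinh.2 (by nlinarith)
  have hminus : sinh (t * x - y) ≤ sinh (t * y - x) := sinh_le_sinh.2 (by nlinarith)
  rw [sinh_add, sinh_add] at hplus
  rw [sinh_sub, sinh_sub] at hminus
  linarith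

theorem cosh_nat_mul_sub_one_mul_le (n : ℕ) {x y : ℝ} (hx : 0 ≤ x) (hxy : x ≤ y) :
    (cosh (n * x) - 1) * (cosh y + 1) ≤ (cosh (n * y) - 1) * (cosh x + 1) := by
  rcases Nat.eq_zero_or_pos n with rfl | hn
  · simp
  have hmono : sinh (n * (x / 2)) * cosh (y / 2) ≤ sinh (n * (y / 2)) * cosh (x / 2) :=
    sinh_mul_mul_cosh_le_s7 (by exact_mod_cast hn) (by linarith)
  have hnonneg : 0 ≤ sinh (n * (x / 2)) * cosh (y / 2) :=
    mul_nonneg (sinh_nonneg_iff.2 (by positivity)) (cosh_pos _).le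
  simp only [cosh_sub_one_eq_two_mul_sinh_half_sq, cosh_add_one_eq_two_mul_cosh_half_sq,
    mul_div_assoc]
  nlinarith [mul_self_le_mul_self hnonneg hmono]

theorem phi_arg_eq (n : ℕ) (δ D : ℝ) :
    cosh (n * δ) + (cosh (n * δ) - 1) * (cosh D - cosh δ) / (cosh δ + 1) =
      1 + (cosh (n * δ) - 1) * ((cosh D + 1) / (cosh δ + 1)) := by
  have : cosh δ + 1 ≠ 0 := by linarith [cosh_pos δ]
  field_simp
  ring

theorem stmt7_general (n : ℕ) (δ D : ℝ) (hδ : 0 < δ) (hδD : δ ≤ D) :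
    (n : ℝ) * δ ≤ Phi n δ D ∧ Phi n δ D ≤ (n : ℝ) * D := by
  rw [Phi, arcosh_eq_real_arcosh, phi_arg_eq]
  have hδ1 : 0 < cosh δ + 1 := by linarith [cosh_pos δ]
  have hratio : 1 ≤ (cosh D + 1) / (cosh δ + 1) := by
    rw [one_le_div hδ1, add_le_add_iff_right, cosh_le_cosh, abs_of_pos hδ,
      abs_of_pos (hδ.trans_le hδD)]
    exact hδD
  have hsub : 0 ≤ cosh (n * δ) - 1 := sub_nonneg.2 (one_le_cosh _)
  have hupper : (cosh (n * δ) - 1) * ((cosh D + 1) / (cosh δ + 1)) ≤ cosh (n * D) - 1 := by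
    rw [← mul_div_assoc, div_le_iff₀ hδ1]
    exact cosh_nat_mul_sub_one_mul_le n hδ.le hδD
  constructor
  · exact le_arcosh_of_cosh_le (by positivity) (by nlinarith)
  · exact arcosh_le_of_le_cosh (mul_nonneg n.cast_nonneg (hδ.le.trans hδD)) (by nlinarith)
      (by linarith)

/-- For every integer `n ≥ 1` and all real `0 < δ ≤ D`, one has `nδ ≤ Φ_n(δ, D) ≤ nD`. -/
theorem stmt7 (n : ℕ) (hn : 1 ≤ n) (δ D : ℝ) (hδ : 0 < δ) (hδD : δ ≤ D) :
    (n : ℝ) * δ ≤ Phi n δ D ∧ Phi n δ D ≤ (n : ℝ) * D :=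
  stmt7_general n δ D hδ hδD
end

section
/- For all real numbers x, y with 0 < y ≤ 2x one has 0 < (coth x)(coth y − csch y) ≤ 1, and moreover (coth x)(coth 2x − csch 2x) = 1. Consequently the function Ψ(x,y) = arccos((coth x)(coth y − csch y)) is well-defined with values in [0, π/2) on the domain {(x,y) : 0 < y ≤ 2x}, and on this domain Ψ is monotone increasing in its first argument and monotone decreasing in its second argument (in the weak sense: Ψ(x,y) ≤ Ψ(x',y) whenever x ≤ x', and Ψ(x,y) ≥ Ψ(x,y') whenever y ≤ y', for pairs in the domain). -/
/-- The hyperbolic cotangent. -/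
noncomputable def coth (x : ℝ) : ℝ := Real.cosh x / Real.sinh x

/-- The hyperbolic cosecant. -/
noncomputable def csch (x : ℝ) : ℝ := 1 / Real.sinh x

/-- The function `Ψ(x,y) = arccos((coth x)(coth y − csch y))`. -/
noncomputable def Psi (x y : ℝ) : ℝ := Real.arccos (coth x * (coth y - csch y))

/-!
By the half-angle formula `coth y − csch y = (cosh y − 1) / sinh y = tanh (y/2)`, so
`(coth x)(coth y − csch y) = tanh (y/2) / tanh x`. Since `tanh` is strictly increasing and
vanishes at `0`, this ratio lies in `(0, 1]` when `0 < y/2 ≤ x`, equals `1` at `y = 2x`,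
decreases in `x` and increases in `y`; `arccos` is antitone and below `π/2` on positive arguments.
-/

open Real

namespace Real

theorem tanh_strictMono : StrictMono tanh := fun a b hab => by
  have mem : ∀ c, tanh c ∈ Set.Ioo (-1) 1 := fun c => ⟨neg_one_lt_tanh c, tanh_lt_one c⟩
  rwa [← artanh_lt_artanh_iff (mem a) (mem b), artanh_tanh, artanh_tanh]

theorem tanh_pos {x : ℝ} (hx : 0 < x) : 0 < tanh x := by
  simpa only [tanh_zero] using tanh_strictMono hx

theorem tanh_ne_zero {x : ℝ} (hx : x ≠ 0) : tanh x ≠ 0 :=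
  (tanh_injective.ne_iff' tanh_zero).2 hx

end Real

theorem coth_eq_inv_tanh (x : ℝ) : coth x = (tanh x)⁻¹ := by
  rw [coth, tanh_eq_sinh_div_cosh, inv_div]

theorem coth_sub_csch (y : ℝ) : coth y - csch y = tanh (y / 2) := by
  obtain ⟨u, rfl⟩ : ∃ u, y = 2 * u := ⟨y / 2, by ring⟩
  have hcu : cosh u ≠ 0 := (cosh_pos u).ne'
  rw [coth, csch, ← sub_div, sinh_two_mul, cosh_two_mul, cosh_sq,
    mul_div_cancel_left₀ u two_ne_zero, tanh_eq_sinh_div_cosh]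
  rcases eq_or_ne (sinh u) 0 with hsu | hsu
  · simp [hsu]
  · field_simp
    ring

theorem coth_mul_coth_sub_csch (x y : ℝ) :
    coth x * (coth y - csch y) = tanh (y / 2) / tanh x := by
  rw [coth_eq_inv_tanh, coth_sub_csch, inv_mul_eq_div]

theorem coth_mul_coth_sub_csch_pos {x y : ℝ} (hx : 0 < x) (hy : 0 < y) :
    0 < coth x * (coth y - csch y) := by
  rw [coth_mul_coth_sub_csch]
  exact div_pos (tanh_pos (half_pos hy)) (tanh_pos hx)

theorem coth_mul_coth_sub_csch_le_one {x y : ℝ} (hx : 0 < x) (hxy : y ≤ 2 * x) :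
    coth x * (coth y - csch y) ≤ 1 := by
  rw [coth_mul_coth_sub_csch, div_le_one (tanh_pos hx)]
  exact tanh_strictMono.monotone (by linarith)

theorem coth_mul_coth_two_mul_sub_csch_two_mul {x : ℝ} (hx : x ≠ 0) :
    coth x * (coth (2 * x) - csch (2 * x)) = 1 := by
  rw [coth_mul_coth_sub_csch, mul_div_cancel_left₀ x two_ne_zero, div_self (tanh_ne_zero hx)]

theorem Psi_eq_arccos (x y : ℝ) : Psi x y = arccos (tanh (y / 2) / tanh x) := by
  rw [Psi, coth_mul_coth_sub_csch]

theorem Psi_lt_pi_div_two {x y : ℝ} (hx : 0 < x) (hy : 0 < y) : Psi x y < π / 2 :=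
  arccos_lt_pi_div_two.2 (coth_mul_coth_sub_csch_pos hx hy)

theorem Psi_le_Psi_of_le_left {x x' y : ℝ} (hx : 0 < x) (hy : 0 ≤ y) (hxx' : x ≤ x') :
    Psi x y ≤ Psi x' y := by
  rw [Psi_eq_arccos, Psi_eq_arccos]
  refine arccos_le_arccos (div_le_div_of_nonneg_left ?_ (tanh_pos hx)
    (tanh_strictMono.monotone hxx'))
  simpa only [tanh_zero] using tanh_strictMono.monotone (by positivity : (0 : ℝ) ≤ y / 2)

theorem Psi_le_Psi_of_le_right {x y y' : ℝ} (hx : 0 ≤ x) (hyy' : y ≤ y') :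
    Psi x y' ≤ Psi x y := by
  rw [Psi_eq_arccos, Psi_eq_arccos]
  refine arccos_le_arccos (div_le_div_of_nonneg_right (tanh_strictMono.monotone (by linarith)) ?_)
  simpa only [tanh_zero] using tanh_strictMono.monotone hx

/-- For `0 < y ≤ 2x` one has `0 < (coth x)(coth y − csch y) ≤ 1`, with
`(coth x)(coth 2x − csch 2x) = 1`; consequently `Ψ` takes values in `[0, π/2)` on this
domain, is monotone increasing in its first argument and monotone decreasing in its
second argument. -/
theorem stmt8 :
    (∀ x y : ℝ, 0 < y → y ≤ 2 * x →
      0 < coth x * (coth y - csch y) ∧ coth x * (coth y - csch y) ≤ 1) ∧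
    (∀ x : ℝ, 0 < x → coth x * (coth (2 * x) - csch (2 * x)) = 1) ∧
    (∀ x y : ℝ, 0 < y → y ≤ 2 * x → 0 ≤ Psi x y ∧ Psi x y < Real.pi / 2) ∧
    (∀ x x' y : ℝ, 0 < y → y ≤ 2 * x → y ≤ 2 * x' → x ≤ x' → Psi x y ≤ Psi x' y) ∧
    (∀ x y y' : ℝ, 0 < y → y ≤ 2 * x → y' ≤ 2 * x → y ≤ y' → Psi x y' ≤ Psi x y) := by
  have pos_of_le_two_mul : ∀ {x y : ℝ}, 0 < y → y ≤ 2 * x → 0 < x := fun hy hxy => by linarith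
  refine ⟨fun x y hy hxy => ?_, fun x hx => ?_, fun x y hy hxy => ?_,
    fun x x' y hy hxy _ hxx' => ?_, fun x y y' hy hxy _ hyy' => ?_⟩
  · exact ⟨coth_mul_coth_sub_csch_pos (pos_of_le_two_mul hy hxy) hy,
      coth_mul_coth_sub_csch_le_one (pos_of_le_two_mul hy hxy) hxy⟩
  · exact coth_mul_coth_two_mul_sub_csch_two_mul hx.ne'
  · exact ⟨arccos_nonneg _, Psi_lt_pi_div_two (pos_of_le_two_mul hy hxy) hy⟩
  · exact Psi_le_Psi_of_le_left (pos_of_le_two_mul hy hxy) hy.le hxx'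
  · exact Psi_le_Psi_of_le_right (pos_of_le_two_mul hy hxy).le hyy'
end

section
/- For every fixed real number D > 0, the function d ↦ (cosh D · cosh d − cosh(2D))/(sinh D · sinh d) is strictly monotone increasing on (0, ∞). -/
/-!
After dividing out the constant `sinh D > 0`, the function is `(a cosh d - b) / sinh d` with
`a = cosh D < b = cosh 2D`. By `cosh² - sinh² = 1` its derivative is `(b cosh d - a) / sinh² d`,
which is positive since `b cosh d ≥ b > a`.
-/

open Real Set

theorem hasDerivAt_cosh_sub_div_sinh (a b : ℝ) {x : ℝ} (hx : x ≠ 0) :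
    HasDerivAt (fun d => (a * cosh d - b) / sinh d) ((b * cosh x - a) / sinh x ^ 2) x := by
  have hsx : sinh x ≠ 0 := sinh_ne_zero.2 hx
  have key : b * cosh x - a = a * sinh x * sinh x - (a * cosh x - b) * cosh x := by
    linear_combination a * cosh_sq_sub_sinh_sq x
  rw [key]
  exact (((hasDerivAt_cosh x).const_mul a).sub_const b).div (hasDerivAt_sinh x) hsx

theorem strictMonoOn_cosh_sub_div_sinh {a b : ℝ} (hab : a < b) (hb : 0 ≤ b) :
    StrictMonoOn (fun d => (a * cosh d - b) / sinh d) (Ioi 0) := by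
  have hderiv (x : ℝ) (hx : x ∈ Ioi 0) :
      HasDerivAt (fun d => (a * cosh d - b) / sinh d) ((b * cosh x - a) / sinh x ^ 2) x :=
    hasDerivAt_cosh_sub_div_sinh a b (ne_of_gt hx)
  refine strictMonoOn_of_hasDerivWithinAt_pos (f' := fun x => (b * cosh x - a) / sinh x ^ 2)
    (convex_Ioi 0) (fun x hx => (hderiv x hx).continuousAt.continuousWithinAt) ?_ ?_ <;> rw [interior_Ioi]
  · exact fun x hx => (hderiv x hx).hasDerivWithinAt
  · intro x hx
    have hnum : a < b * cosh x := hab.trans_le (le_mul_of_one_le_right hb (one_le_cosh x))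
    exact div_pos (by linarith) (pow_pos (sinh_pos_iff.2 hx) 2)

theorem cosh_lt_cosh_two_mul {D : ℝ} (hD : 0 < D) : cosh D < cosh (2 * D) := by
  rw [cosh_lt_cosh, abs_of_pos hD, abs_of_pos (by positivity)]
  linarith

/-- For every fixed `D > 0`, the function
`d ↦ (cosh D · cosh d − cosh 2D)/(sinh D · sinh d)` is strictly monotone increasing on
`(0, ∞)`. -/
theorem stmt9 (D : ℝ) (hD : 0 < D) :
    StrictMonoOn
      (fun d : ℝ =>
        (Real.cosh D * Real.cosh d - Real.cosh (2 * D)) / (Real.sinh D * Real.sinh d))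
      (Set.Ioi 0) := by
  have hmono := strictMonoOn_cosh_sub_div_sinh (cosh_lt_cosh_two_mul hD) (cosh_pos _).le
  intro x hx y hy hxy
  simp only [mul_comm (sinh D), ← div_div]
  exact div_lt_div_of_pos_right (hmono hx hy hxy) (sinh_pos_iff.2 hD)
end

section
/- Let D be a real number with 0.58 ≤ D ≤ 0.7, and set T₃ = Φ₃(0.58, D). Then D < T₃ < log 7, so that in particular Θ(D/2, (log 7)/2) and Θ(T₃/2, (log 7)/2) are defined, and cos( Θ(D/2, (log 7)/2) − Θ(T₃/2, (log 7)/2) ) < (cosh D · cosh T₃ − cosh(2D))/(sinh D · sinh T₃). -/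
open Real

/-- The function `Θ(w, R) = arccos(tanh w / tanh R)`, defined for `0 < w < R`. -/
noncomputable def Theta (w R : ℝ) : ℝ := Real.arccos (Real.tanh w / Real.tanh R)

/-!
Write `c = cosh D`, `Y = cosh T₃` and `R = (log 7)/2`, so that `tanh R = 3/4`. The half-angle
identity `tanh (x/2) · sinh x = cosh x - 1` turns `cos Θ(x/2, R) · sinh x` and
`sin Θ(x/2, R) · sinh x` into algebraic functions of `cosh x`; multiplied by
`tanh² R · sinh D · sinh T₃`, the angle inequality becomes
`(c-1)(Y-1) + √(P c · P Y) < (9/16)(c Y - 2c² + 1)` with `P t = (9/16)(t² - 1) - (t - 1)²`.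
By definition of `Φ₃`, `Y` is an affine function of `c` whose coefficients are determined by
`cosh 0.58`, so Taylor bounds for `exp 0.58` and `exp 0.7` confine `(c, Y)` to a thin strip on
which this polynomial inequality holds with room to spare; the bounds `D < T₃ < log 7` are read
off from `c < Y < 25/7 = cosh (log 7)`.
-/

namespace Real

theorem tanh_half (x : ℝ) : tanh (x / 2) = sinh x / (cosh x + 1) := by
  obtain ⟨y, rfl⟩ : ∃ y, x = 2 * y := ⟨x / 2, by ring⟩
  have hc : 0 < cosh y := cosh_pos y
  rw [mul_div_cancel_left₀ y two_ne_zero, sinh_two_mul, cosh_two_mul, sinh_sq,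
    tanh_eq_sinh_div_cosh, div_eq_div_iff hc.ne' (by nlinarith)]
  ring

theorem tanh_half_mul_sinh (x : ℝ) : tanh (x / 2) * sinh x = cosh x - 1 := by
  have hc : cosh x + 1 ≠ 0 := by linarith [one_le_cosh x]
  rw [tanh_half, div_mul_eq_mul_div, div_eq_iff hc, ← sq, sinh_sq]
  ring

theorem tanh_log_div_two {a : ℝ} (ha : 0 < a) : tanh (log a / 2) = (a - 1) / (a + 1) := by
  rw [tanh_half, sinh_log ha, cosh_log ha]
  field_simp
  ring

end Real

open Set

section Theta

variable {x y R : ℝ}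

theorem cos_Theta_half_mul_sinh (hx : 0 ≤ x) (hxR : x / 2 < R) :
    cos (Theta (x / 2) R) * sinh x * tanh R = cosh x - 1 := by
  have hR : 0 < tanh R := by simpa using tanh_strictMono (show 0 < R by linarith)
  have hle : tanh (x / 2) ≤ tanh R := tanh_strictMono.monotone hxR.le
  have hnn : 0 ≤ tanh (x / 2) := by
    simpa using tanh_strictMono.monotone (by linarith : 0 ≤ x / 2)
  rw [Theta, cos_arccos (by linarith [div_nonneg hnn hR.le]) ((div_le_one hR).2 hle),
    ← tanh_half_mul_sinh]
  field_simp

theorem sin_Theta_half_mul_sinh (hx : 0 ≤ x) (hxR : x / 2 < R) :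
    sin (Theta (x / 2) R) * sinh x * tanh R =
      √(tanh R ^ 2 * sinh x ^ 2 - (cosh x - 1) ^ 2) := by
  have hR : 0 < tanh R := by simpa using tanh_strictMono (show 0 < R by linarith)
  have hs : 0 ≤ sinh x * tanh R := mul_nonneg (sinh_nonneg_iff.2 hx) hR.le
  rw [Theta, sin_arccos, mul_assoc, ← sqrt_sq hs, ← sqrt_mul' _ (sq_nonneg _),
    ← tanh_half_mul_sinh]
  congr 1
  field_simp

theorem cos_Theta_half_sub_Theta_half_mul (hx : 0 ≤ x) (hxR : x / 2 < R) (hy : 0 ≤ y)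
    (hyR : y / 2 < R) :
    cos (Theta (x / 2) R - Theta (y / 2) R) * (sinh x * sinh y) * tanh R ^ 2 =
      (cosh x - 1) * (cosh y - 1) + √(tanh R ^ 2 * sinh x ^ 2 - (cosh x - 1) ^ 2) *
        √(tanh R ^ 2 * sinh y ^ 2 - (cosh y - 1) ^ 2) := by
  rw [← sin_Theta_half_mul_sinh hx hxR, ← sin_Theta_half_mul_sinh hy hyR,
    ← cos_Theta_half_mul_sinh hx hxR, ← cos_Theta_half_mul_sinh hy hyR, cos_sub]
  ring

end Theta

section Phi

variable {n : ℕ} {δ D : ℝ}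

theorem one_le_Phi_arg (h : cosh δ ≤ cosh D) :
    1 ≤ cosh (n * δ) + (cosh (n * δ) - 1) * (cosh D - cosh δ) / (cosh δ + 1) := by
  have hn := one_le_cosh (n * δ)
  have hδ := one_le_cosh δ
  have : 0 ≤ (cosh (n * δ) - 1) * (cosh D - cosh δ) / (cosh δ + 1) := by
    apply div_nonneg (mul_nonneg _ _) <;> linarith
  linarith

theorem cosh_Phi (h : cosh δ ≤ cosh D) :
    cosh (Phi n δ D) =
      cosh (n * δ) + (cosh (n * δ) - 1) * (cosh D - cosh δ) / (cosh δ + 1) :=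
  cosh_arcosh (one_le_Phi_arg h)

theorem Phi_nonneg (h : cosh δ ≤ cosh D) : 0 ≤ Phi n δ D :=
  arcosh_nonneg (one_le_Phi_arg h)

end Phi

theorem cosh_mem_Icc_of_exp_mem_Icc {x l u : ℝ} (hl : 0 < l) (h : exp x ∈ Icc l u) :
    cosh x ∈ Icc ((l + u⁻¹) / 2) ((u + l⁻¹) / 2) := by
  have hu : (exp x)⁻¹ ≤ l⁻¹ := inv_anti₀ hl h.1
  have hl : u⁻¹ ≤ (exp x)⁻¹ := inv_anti₀ (exp_pos x) h.2
  rw [cosh_eq, exp_neg]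
  constructor <;> linarith [h.1, h.2]

theorem cosh_058_mem_Icc : cosh 0.58 ∈ Icc 1.1728 1.1731 := by
  have lo := sum_le_exp_of_nonneg (x := 0.58) (by norm_num) 8
  have hi := exp_bound' (x := 0.58) (by norm_num) (by norm_num) (n := 8) (by norm_num)
  norm_num [Finset.sum_range_succ, Nat.factorial] at lo hi
  have := cosh_mem_Icc_of_exp_mem_Icc (by norm_num) ⟨lo, hi⟩
  norm_num at this
  constructor <;> linarith [this.1, this.2]

theorem cosh_07_le : cosh 0.7 ≤ 1.2552 := by
  have lo := sum_le_exp_of_nonneg (x := 0.7) (by norm_num) 8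
  have hi := exp_bound' (x := 0.7) (by norm_num) (by norm_num) (n := 8) (by norm_num)
  norm_num [Finset.sum_range_succ, Nat.factorial] at lo hi
  have := cosh_mem_Icc_of_exp_mem_Icc (by norm_num) ⟨lo, hi⟩
  norm_num at this
  linarith [this.2]

theorem cosh_058_le_cosh {D : ℝ} (h1 : 0.58 ≤ D) : cosh 0.58 ≤ cosh D :=
  (cosh_strictMonoOn.le_iff_le (by norm_num) (mem_Ici.2 (by linarith))).2 h1

theorem cosh_mem_Icc_of_mem_Icc {D : ℝ} (h1 : 0.58 ≤ D) (h2 : D ≤ 0.7) :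
    cosh D ∈ Icc 1.1728 1.2552 :=
  ⟨cosh_058_mem_Icc.1.trans (cosh_058_le_cosh h1),
    ((cosh_strictMonoOn.le_iff_le (mem_Ici.2 (by linarith)) (by norm_num)).2 h2).trans cosh_07_le⟩

/-- Here `cosh T₃ = cosh 1.74 + k (cosh D - cosh 0.58)` with `cosh 1.74 ≈ 2.936`, `k ≈ 0.89`. -/
theorem cosh_Phi_three_bounds {D : ℝ} (h1 : 0.58 ≤ D) (h2 : D ≤ 0.7) :
    2.93 + 0.85 * (cosh D - 1.1731) ≤ cosh (Phi 3 0.58 D) ∧ cosh (Phi 3 0.58 D) < 25 / 7 := by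
  have hac := cosh_058_le_cosh h1
  have hc := (cosh_mem_Icc_of_mem_Icc h1 h2).2
  obtain ⟨ha1, ha2⟩ := cosh_058_mem_Icc
  rw [cosh_Phi hac, Nat.cast_ofNat, cosh_three_mul]
  set a := cosh 0.58
  set G := 4 * a ^ 3 - 3 * a
  have hG1 : 2.93 ≤ G := by nlinarith [mul_nonneg (sub_nonneg.2 ha1) (sub_nonneg.2 ha1)]
  have hG2 : G ≤ 2.94 := by nlinarith [mul_nonneg (sub_nonneg.2 ha2) (sub_nonneg.2 ha2)]
  have hk1 : 0.85 ≤ (G - 1) / (a + 1) := (le_div_iff₀ (by linarith)).2 (by linarith)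
  have hk2 : (G - 1) / (a + 1) ≤ 1 := (div_le_one (by linarith)).2 (by linarith)
  rw [mul_div_right_comm]
  constructor <;> nlinarith [sub_nonneg.2 hac]

theorem cosh_pair_inequality {c Y : ℝ} (hc1 : 1.1728 ≤ c) (hc2 : c ≤ 1.2552)
    (hY : 2.93 + 0.85 * (c - 1.1731) ≤ Y) :
    (c - 1) * (Y - 1) + √((3 / 4) ^ 2 * (c ^ 2 - 1) - (c - 1) ^ 2) *
      √((3 / 4) ^ 2 * (Y ^ 2 - 1) - (Y - 1) ^ 2) < (3 / 4) ^ 2 * (c * Y - (2 * c ^ 2 - 1)) := by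
  have hc : 0 ≤ (3 / 4) ^ 2 * (c ^ 2 - 1) - (c - 1) ^ 2 := by nlinarith
  rw [← sqrt_mul hc, ← lt_sub_iff_add_lt', sqrt_lt' (by nlinarith)]
  nlinarith [mul_nonneg (sub_nonneg.2 hc1) (sub_nonneg.2 hc2),
    mul_nonneg (sub_nonneg.2 hY) (sub_nonneg.2 hc1),
    mul_nonneg (sub_nonneg.2 hY) (sub_nonneg.2 hc2),
    mul_nonneg (sub_nonneg.2 hY) (sub_nonneg.2 hY)]

/-- For `0.58 ≤ D ≤ 0.7` and `T₃ = Φ₃(0.58, D)` one has `D < T₃ < log 7` and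
`cos(Θ(D/2, (log 7)/2) − Θ(T₃/2, (log 7)/2)) < (cosh D cosh T₃ − cosh 2D)/(sinh D sinh T₃)`. -/
theorem stmt10 (D : ℝ) (h1 : (0.58 : ℝ) ≤ D) (h2 : D ≤ (0.7 : ℝ)) :
    D < Phi 3 0.58 D ∧ Phi 3 0.58 D < Real.log 7 ∧
    Real.cos (Theta (D / 2) (Real.log 7 / 2) - Theta (Phi 3 0.58 D / 2) (Real.log 7 / 2)) <
      (Real.cosh D * Real.cosh (Phi 3 0.58 D) - Real.cosh (2 * D)) /
        (Real.sinh D * Real.sinh (Phi 3 0.58 D)) := by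
  have hD : 0 < D := by linarith
  have hT : 0 ≤ Phi 3 0.58 D := Phi_nonneg (cosh_058_le_cosh h1)
  obtain ⟨hc1, hc2⟩ := cosh_mem_Icc_of_mem_Icc h1 h2
  obtain ⟨hY1, hY2⟩ := cosh_Phi_three_bounds h1 h2
  set T := Phi 3 0.58 D
  have hDT : D < T := (cosh_strictMonoOn.lt_iff_lt (mem_Ici.2 hD.le) hT).1 (by linarith)
  have hT7 : T < log 7 := by
    refine (cosh_strictMonoOn.lt_iff_lt hT (mem_Ici.2 (log_pos (by norm_num)).le)).1 ?_
    rw [cosh_log (by norm_num)]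
    linarith
  refine ⟨hDT, hT7, ?_⟩
  have hτ : tanh (log 7 / 2) = 3 / 4 := by rw [tanh_log_div_two (by norm_num)]; norm_num
  have hcos := cos_Theta_half_sub_Theta_half_mul (R := log 7 / 2) hD.le (by linarith) hT
    (by linarith)
  rw [hτ, sinh_sq, sinh_sq] at hcos
  have hkey := cosh_pair_inequality hc1 hc2 hY1
  rw [cosh_two_mul, sinh_sq,
    lt_div_iff₀ (mul_pos (sinh_pos_iff.2 hD) (sinh_pos_iff.2 (hD.trans hDT)))]
  linarith
end

section
/- Let R, w, and φ be real numbers with 0 < w < R and 0 < φ < π/2. Set v = 1/(sinh w + cosh w·cos φ) and c = v·sin φ·cosh w. Then v² − (v² + c² + 1)²/(4(c² + cosh²R)) ≥ 0. -/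
/-- Let `0 < w < R` and `0 < φ < π/2`. With `v = 1/(sinh w + cosh w cos φ)` and
`c = v sin φ cosh w`, one has `v² − (v² + c² + 1)²/(4(c² + cosh²R)) ≥ 0`. -/
theorem stmt17 (R w φ : ℝ) (h1 : 0 < w) (h2 : w < R) (h3 : 0 < φ) (h4 : φ < Real.pi / 2)
    (v c : ℝ) (hv : v = 1 / (Real.sinh w + Real.cosh w * Real.cos φ))
    (hc : c = v * Real.sin φ * Real.cosh w) :
    v ^ 2 - (v ^ 2 + c ^ 2 + 1) ^ 2 / (4 * (c ^ 2 + Real.cosh R ^ 2)) ≥ 0 := by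
  set s := Real.sinh w with hsdef
  set h := Real.cosh w with hhdef
  set K := Real.cosh R with hKdef
  set sφ := Real.sin φ with hsφ
  set cφ := Real.cos φ with hcφ
  set d : ℝ := s + h * cφ with hddef
  have hs : 0 < s := Real.sinh_pos_iff.2 h1
  have hh : (1:ℝ) ≤ h := Real.one_le_cosh w
  have hcos : 0 < cφ := Real.cos_pos_of_mem_Ioo ⟨by linarith [Real.pi_pos], h4⟩
  have hd : 0 < d := by positivity
  have hvd : v * d = 1 := by rw [hv]; field_simp
  have hcd : c * d = sφ * h := by rw [hc, hv]; field_simp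
  have hRw : h ≤ K := by
    have : |w| < |R| := by
      rw [abs_of_pos h1, abs_of_pos (h1.trans h2)]; exact h2
    exact (Real.cosh_lt_cosh.2 this).le
  have hsin : sφ ^ 2 + cφ ^ 2 = 1 := Real.sin_sq_add_cos_sq φ
  have hch : h ^ 2 = s ^ 2 + 1 := Real.cosh_sq w
  have hD : 0 < 4 * (c ^ 2 + K ^ 2) := by positivity
  rw [ge_iff_le, sub_nonneg, div_le_iff₀ hD]
  -- key identity: (v²+c²+1)·d² = 2h(h + s·cφ)
  have e1 : (v ^ 2 + c ^ 2 + 1) * d ^ 2 = 2 * h * (h + s * cφ) := by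
    linear_combination (v * d + 1) * hvd + (c * d + sφ * h) * hcd + h ^ 2 * hsin - hch
  have e2 : h ^ 2 * (h + s * cφ) ^ 2 = sφ ^ 2 * h ^ 2 + h ^ 2 * d ^ 2 := by
    linear_combination (h ^ 2 * sφ ^ 2) * hch - (h ^ 2 * (h ^ 2 - s ^ 2)) * hsin
  have g1 : (v ^ 2 + c ^ 2 + 1) ^ 2 * (d ^ 2) ^ 2 = 4 * h ^ 2 * (h + s * cφ) ^ 2 := by
    linear_combination ((v ^ 2 + c ^ 2 + 1) * d ^ 2 + 2 * h * (h + s * cφ)) * e1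
  have g2 : v ^ 2 * (4 * (c ^ 2 + K ^ 2)) * (d ^ 2) ^ 2
      = 4 * (sφ ^ 2 * h ^ 2 + K ^ 2 * d ^ 2) := by
    linear_combination (4 * (c ^ 2 * d ^ 2 + K ^ 2 * d ^ 2) * (v * d + 1)) * hvd
      + (4 * (c * d + sφ * h)) * hcd
  have g3 : 4 * h ^ 2 * (h + s * cφ) ^ 2 ≤ 4 * (sφ ^ 2 * h ^ 2 + K ^ 2 * d ^ 2) := by
    nlinarith [mul_nonneg (mul_nonneg (sub_nonneg.2 hRw) (by linarith : (0:ℝ) ≤ K + h))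
      (sq_nonneg d), e2]
  have hd4 : (0:ℝ) < (d ^ 2) ^ 2 := by positivity
  have := g1.trans_le (g3.trans_eq g2.symm)
  exact le_of_mul_le_mul_right this hd4
end

section
/- Let R, w₁, w₂ be real numbers with 0 < w₁ ≤ w₂ < R, and set Ψᵢ = arccos(tanh wᵢ / tanh R) for i = 1, 2 (so that 0 < Ψ₂ ≤ Ψ₁ < π/2). Let α be a real number with Ψ₁ − Ψ₂ < α ≤ Ψ₁ + Ψ₂. Then there exists a unique pair (α₁, α₂) of real numbers with −π/2 ≤ αᵢ ≤ π/2 for i = 1, 2, such that α₁ + α₂ = α and tanh w₁ · cos α₂ = tanh w₂ · cos α₁. -/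
lemma my_tanh_lt_tanh {x y : ℝ} (h : x < y) : Real.tanh x < Real.tanh y := by
  rw [Real.tanh_eq_sinh_div_cosh, Real.tanh_eq_sinh_div_cosh,
    div_lt_div_iff₀ (Real.cosh_pos x) (Real.cosh_pos y)]
  have h1 : Real.sinh (x - y) < 0 := Real.sinh_neg_iff.mpr (by linarith)
  rw [Real.sinh_sub] at h1
  linarith

/-- Let `0 < w₁ ≤ w₂ < R` and `Ψᵢ = arccos(tanh wᵢ / tanh R)`. For any `α` with
`Ψ₁ − Ψ₂ < α ≤ Ψ₁ + Ψ₂` there is a unique pair `(α₁, α₂)` with `−π/2 ≤ αᵢ ≤ π/2`,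
`α₁ + α₂ = α` and `tanh w₁ · cos α₂ = tanh w₂ · cos α₁`. -/
theorem stmt18 (R w₁ w₂ α : ℝ) (h1 : 0 < w₁) (h2 : w₁ ≤ w₂) (h3 : w₂ < R)
    (hα1 : Real.arccos (Real.tanh w₁ / Real.tanh R) -
      Real.arccos (Real.tanh w₂ / Real.tanh R) < α)
    (hα2 : α ≤ Real.arccos (Real.tanh w₁ / Real.tanh R) +
      Real.arccos (Real.tanh w₂ / Real.tanh R)) :
    ∃! p : ℝ × ℝ,
      (-(Real.pi / 2) ≤ p.1 ∧ p.1 ≤ Real.pi / 2) ∧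
      (-(Real.pi / 2) ≤ p.2 ∧ p.2 ≤ Real.pi / 2) ∧
      p.1 + p.2 = α ∧
      Real.tanh w₁ * Real.cos p.2 = Real.tanh w₂ * Real.cos p.1 := by
  have pi_pos := Real.pi_pos
  have htR : 0 < Real.tanh R := by
    have := my_tanh_lt_tanh (show (0:ℝ) < R by linarith)
    simpa using this
  have ht1 : 0 < Real.tanh w₁ := by
    have := my_tanh_lt_tanh h1
    simpa using this
  have ht12 : Real.tanh w₁ ≤ Real.tanh w₂ := by
    rcases eq_or_lt_of_le h2 with h | h
    · rw [h]
    · exact (my_tanh_lt_tanh h).le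
  have ht2 : 0 < Real.tanh w₂ := lt_of_lt_of_le ht1 ht12
  -- α > 0
  have hΨle : Real.arccos (Real.tanh w₂ / Real.tanh R) ≤
      Real.arccos (Real.tanh w₁ / Real.tanh R) := by
    rw [Real.arccos_eq_pi_div_two_sub_arcsin, Real.arccos_eq_pi_div_two_sub_arcsin]
    linarith [Real.monotone_arcsin ((div_le_div_iff_of_pos_right htR).mpr ht12)]
  have hα0 : 0 < α := by linarith
  -- α < π
  have hΨ1 : Real.arccos (Real.tanh w₁ / Real.tanh R) < Real.pi / 2 :=
    Real.arccos_lt_pi_div_two.mpr (div_pos ht1 htR)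
  have hΨ2 : Real.arccos (Real.tanh w₂ / Real.tanh R) < Real.pi / 2 :=
    Real.arccos_lt_pi_div_two.mpr (div_pos ht2 htR)
  have hαπ : α < Real.pi := by linarith
  have hsinα : 0 < Real.sin α := Real.sin_pos_of_pos_of_lt_pi hα0 hαπ
  -- uniqueness key
  have key : ∀ u v : ℝ, α - Real.pi / 2 ≤ u → u ≤ Real.pi / 2 →
      α - Real.pi / 2 ≤ v → v ≤ Real.pi / 2 →
      Real.tanh w₁ * Real.cos (α - u) = Real.tanh w₂ * Real.cos u →
      Real.tanh w₁ * Real.cos (α - v) = Real.tanh w₂ * Real.cos v → u = v := by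
    intro u v hu1 hu2 hv1 hv2 hequ heqv
    rw [Real.cos_sub] at hequ heqv
    have hmul : Real.tanh w₁ * Real.sin α *
        (Real.sin u * Real.cos v - Real.sin v * Real.cos u) = 0 := by
      linear_combination Real.cos v * hequ - Real.cos u * heqv
    have hS : Real.tanh w₁ * Real.sin α ≠ 0 := ne_of_gt (mul_pos ht1 hsinα)
    have hsin0 : Real.sin (u - v) = 0 := by
      rw [Real.sin_sub]
      rcases mul_eq_zero.mp hmul with h | h
      · exact absurd h hS
      · linarith
    have h5 : u - v = 0 := by
      rw [Real.sin_eq_zero_iff_of_lt_of_lt (by linarith) (by linarith)] at hsin0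
      exact hsin0
    linarith
  -- existence by IVT
  set g : ℝ → ℝ := fun x => Real.tanh w₁ * Real.cos (α - x) - Real.tanh w₂ * Real.cos x with hg
  have hab : α - Real.pi / 2 ≤ Real.pi / 2 := by linarith
  have hcont : ContinuousOn g (Set.Icc (α - Real.pi / 2) (Real.pi / 2)) := by
    apply Continuous.continuousOn; fun_prop
  have hga : g (α - Real.pi / 2) ≤ 0 := by
    have e1 : α - (α - Real.pi / 2) = Real.pi / 2 := by ring
    simp only [hg, e1, Real.cos_pi_div_two, Real.cos_sub_pi_div_two]
    nlinarith
  have hgb : 0 ≤ g (Real.pi / 2) := by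
    simp only [hg, Real.cos_pi_div_two, Real.cos_sub_pi_div_two]
    nlinarith
  obtain ⟨x, hx, hgx⟩ := intermediate_value_Icc hab hcont ⟨hga, hgb⟩
  have hgx0 : Real.tanh w₁ * Real.cos (α - x) = Real.tanh w₂ * Real.cos x := by
    have : g x = 0 := hgx
    simp only [hg] at this
    linarith
  refine ⟨(x, α - x), ⟨⟨by linarith [hx.1], hx.2⟩, ⟨by linarith [hx.2], by linarith [hx.1]⟩,
    by ring, hgx0⟩, ?_⟩
  rintro ⟨u, v⟩ ⟨⟨hu1, hu2⟩, ⟨hv1, hv2⟩, hsum, heq⟩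
  have hv : v = α - u := by linarith
  subst hv
  have : u = x := key u x (by linarith) hu2 hx.1 hx.2 heq hgx0
  subst this
  rfl
end
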